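/- arXiv:1712.04141 — 9 statements merged into one kernel-verified Lean document; each statement's English description precedes it below -/
import Mathlib

section
/- Let ⟨·,·⟩ be an antisymmetric bilinear form on ℤⁿ and equip ℤ[ℤⁿ] with the Lie bracket [w,v] = ⟨w,v⟩·(w+v) on basis elements. Let α : ℤⁿ → ℤ≥0 be a function and let I be the ℤ-submodule of ℤ[ℤⁿ] generated by {α(w)·w : w ∈ ℤⁿ}. Then I is a Lie ideal of ℤ[ℤⁿ] if and only if α(w) divides ⟨v,w⟩·α(v) for all v, w ∈ ℤⁿ. -/
/-- The bracket on the free `ℤ`-module on `ℤⁿ` defined on basis elements by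
`[w, v] = ⟨w, v⟩ • (w + v)` and extended `ℤ`-bilinearly. -/
noncomputable def br {n : ℕ} (B : (Fin n → ℤ) → (Fin n → ℤ) → ℤ)
    (x y : (Fin n → ℤ) →₀ ℤ) : (Fin n → ℤ) →₀ ℤ :=
  x.sum fun w a => y.sum fun v b => Finsupp.single (w + v) (a * b * B w v)

lemma div_of_mem {n : ℕ} (α : (Fin n → ℤ) → ℕ) (f : (Fin n → ℤ) →₀ ℤ)
    (h : f ∈ Submodule.span ℤ
      (Set.range fun w : Fin n → ℤ => (α w : ℤ) • Finsupp.single w (1 : ℤ)))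
    (u : Fin n → ℤ) : (α u : ℤ) ∣ f u := by
  induction h using Submodule.span_induction with
  | mem x hx =>
      obtain ⟨w, rfl⟩ := hx
      simp only [Finsupp.smul_single, smul_eq_mul, mul_one]
      rcases eq_or_ne w u with rfl | hw
      · simp
      · simp [Finsupp.single_apply_ne_zero, hw, Finsupp.single_eq_of_ne hw]
  | zero => simp
  | add x y _ _ hx hy => simpa using dvd_add hx hy
  | smul a x _ hx => simpa using Dvd.dvd.mul_left hx a

lemma single_mem {n : ℕ} (α : (Fin n → ℤ) → ℕ) (u : Fin n → ℤ) (c : ℤ)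
    (h : (α u : ℤ) ∣ c) :
    Finsupp.single u c ∈ Submodule.span ℤ
      (Set.range fun w : Fin n → ℤ => (α w : ℤ) • Finsupp.single w (1 : ℤ)) := by
  obtain ⟨k, rfl⟩ := h
  have : Finsupp.single u ((α u : ℤ) * k) = k • ((α u : ℤ) • Finsupp.single u (1 : ℤ)) := by
    simp [Finsupp.smul_single, mul_comm]
  rw [this]
  exact Submodule.smul_mem _ _ (Submodule.subset_span ⟨u, rfl⟩)

theorem stmt1 (n : ℕ) (B : (Fin n → ℤ) →ₗ[ℤ] (Fin n → ℤ) →ₗ[ℤ] ℤ)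
    (hB : ∀ x y, B x y = - B y x) (α : (Fin n → ℤ) → ℕ) :
    (∀ x ∈ Submodule.span ℤ
        (Set.range fun w : Fin n → ℤ => (α w : ℤ) • Finsupp.single w (1 : ℤ)),
      ∀ y, br (fun a b => B a b) x y ∈ Submodule.span ℤ
        (Set.range fun w : Fin n → ℤ => (α w : ℤ) • Finsupp.single w (1 : ℤ)))
    ↔ ∀ v w : Fin n → ℤ, (α w : ℤ) ∣ B v w * (α v : ℤ) := by
  have hBvv : ∀ v : Fin n → ℤ, B v v = 0 := by
    intro v
    have := hB v v
    omega
  constructor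
  · intro h v w
    have hx : ((α v : ℤ) • Finsupp.single v (1 : ℤ)) ∈ Submodule.span ℤ
        (Set.range fun w : Fin n → ℤ => (α w : ℤ) • Finsupp.single w (1 : ℤ)) :=
      Submodule.subset_span ⟨v, rfl⟩
    have hbr := h _ hx (Finsupp.single (w - v) 1)
    have hcomp : br (fun a b => B a b) ((α v : ℤ) • Finsupp.single v (1 : ℤ))
        (Finsupp.single (w - v) 1) = Finsupp.single w ((α v : ℤ) * B v (w - v)) := by
      rw [show ((α v : ℤ) • Finsupp.single v (1 : ℤ)) = Finsupp.single v (α v : ℤ) by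
        simp]
      unfold br
      rw [Finsupp.sum_single_index (by simp), Finsupp.sum_single_index (by simp)]
      congr 1
      · abel
      · ring
    rw [hcomp] at hbr
    have hdvd := div_of_mem α _ hbr w
    rw [Finsupp.single_eq_same] at hdvd
    have : B v (w - v) = B v w := by
      have := map_sub (B v) w v
      rw [hBvv v] at this
      omega
    rw [this] at hdvd
    exact (mul_comm (α v : ℤ) (B v w)) ▸ hdvd
  · intro h x hx y
    induction hx using Submodule.span_induction with
    | mem x hx =>
        obtain ⟨w, rfl⟩ := hx
        have hrw : ((fun w : Fin n → ℤ => (α w : ℤ) • Finsupp.single w (1 : ℤ)) w)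
            = Finsupp.single w (α w : ℤ) := by simp
        rw [hrw]
        unfold br
        rw [Finsupp.sum_single_index (by simp)]
        apply Submodule.sum_mem
        intro v _
        apply single_mem
        have hd : (α (w + v) : ℤ) ∣ B w (w + v) * (α w : ℤ) := h w (w + v)
        have : B w (w + v) = B w v := by
          have := map_add (B w) w v
          rw [hBvv w] at this
          omega
        rw [this] at hd
        have : (α w : ℤ) * y v * B w v = y v * (B w v * (α w : ℤ)) := by ring
        rw [this]
        exact Dvd.dvd.mul_left hd (y v)
    | zero =>
        have : br (fun a b => B a b) 0 y = 0 := by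
          unfold br; simp
        rw [this]; exact Submodule.zero_mem _
    | add x₁ x₂ _ _ h1 h2 =>
        have : br (fun a b => B a b) (x₁ + x₂) y =
            br (fun a b => B a b) x₁ y + br (fun a b => B a b) x₂ y := by
          unfold br
          rw [Finsupp.sum_add_index']
          · intro w; simp
          · intro w a₁ a₂
            rw [← Finsupp.sum_add]
            congr 1; ext v b
            rw [← Finsupp.single_add]
            congr 1; ring
        rw [this]; exact Submodule.add_mem _ h1 h2
    | smul a x _ hx' =>
        have : br (fun a b => B a b) (a • x) y = a • br (fun a b => B a b) x y := by
          unfold br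
          rw [Finsupp.sum_smul_index' (by intro w; simp), Finsupp.smul_sum]
          apply Finsupp.sum_congr
          intro w _
          rw [Finsupp.smul_sum]
          apply Finsupp.sum_congr
          intro v _
          rw [Finsupp.smul_single]
          congr 1
          simp only [smul_eq_mul]; ring
        rw [this]; exact Submodule.smul_mem _ _ hx'
end

section
/- For every finite subset X of ℤ^{2g} (g ≥ 1), there exist infinitely many distinct Lie ideals of ℤ[ℤ^{2g}] (with the symplectic bracket [w,v] = ⟨w,v⟩·(w+v)) each of which contains every basis element w with w ∈ X. -/
/-- The standard symplectic form on `ℤ^{2g}`. -/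
def symp (g : ℕ) (w v : Fin (2 * g) → ℤ) : ℤ :=
  ∑ t : Fin g,
    (w ⟨2 * t.1, by have := t.2; omega⟩ * v ⟨2 * t.1 + 1, by have := t.2; omega⟩
      - v ⟨2 * t.1, by have := t.2; omega⟩ * w ⟨2 * t.1 + 1, by have := t.2; omega⟩)

lemma symp_eq_add (g : ℕ) (w v : Fin (2 * g) → ℤ) : symp g w v = symp g w (w + v) := by
  unfold symp
  refine Finset.sum_congr rfl fun t _ => ?_
  simp only [Pi.add_apply]
  ring

lemma dvd_symp (g p : ℕ) (w v : Fin (2 * g) → ℤ) (h : ∀ i, (p : ℤ) ∣ (w + v) i) :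
    (p : ℤ) ∣ symp g w v := by
  rw [symp_eq_add]
  unfold symp
  refine Finset.dvd_sum fun t _ => dvd_sub ((h _).mul_left _) ((h _).mul_right _)

open Classical in
/-- Indicator of the set of nonzero vectors divisible by `p`, with values in `ZMod p`. -/
noncomputable def cfun (g p : ℕ) (u : Fin (2 * g) → ℤ) : ZMod p :=
  if (∀ i, (p : ℤ) ∣ u i) ∧ u ≠ 0 then 1 else 0

noncomputable def phi (g p : ℕ) : ((Fin (2 * g) → ℤ) →₀ ℤ) →ₗ[ℤ] ZMod p :=
  Finsupp.linearCombination ℤ (cfun g p)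

lemma phi_single (g p : ℕ) (u : Fin (2 * g) → ℤ) (a : ℤ) :
    phi g p (Finsupp.single u a) = a • cfun g p u := by
  simp [phi, Finsupp.linearCombination_single]

lemma phi_br (g p : ℕ) (x y : (Fin (2 * g) → ℤ) →₀ ℤ) :
    phi g p (br (symp g) x y) = 0 := by
  unfold br
  rw [map_finsuppSum]
  refine Finset.sum_eq_zero fun w _ => ?_
  dsimp only
  rw [map_finsuppSum]
  refine Finset.sum_eq_zero fun v _ => ?_
  dsimp only
  rw [phi_single]
  by_cases h : (∀ i, (p : ℤ) ∣ (w + v) i) ∧ (w + v) ≠ 0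
  · obtain ⟨k, hk⟩ := dvd_symp g p w v h.1
    rw [cfun, if_pos h, hk, zsmul_eq_mul, mul_one]
    push_cast
    simp
  · rw [cfun, if_neg h, smul_zero]

theorem stmt3 (g : ℕ) (hg : 1 ≤ g) (X : Finset (Fin (2 * g) → ℤ)) :
    {I : Submodule ℤ ((Fin (2 * g) → ℤ) →₀ ℤ) |
      (∀ x ∈ I, ∀ y, br (symp g) x y ∈ I) ∧
      ∀ w ∈ X, Finsupp.single w (1 : ℤ) ∈ I}.Infinite := by
  classical
  have h2g : 0 < 2 * g := by omega
  obtain ⟨B, hBp⟩ : ∃ B : ℕ, ∀ w ∈ X, ∀ i, (w i).natAbs ≤ B := by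
    refine ⟨X.sup (fun w => Finset.univ.sup fun i => (w i).natAbs), fun w hw i => ?_⟩
    exact le_trans (Finset.le_sup (f := fun i => (w i).natAbs) (Finset.mem_univ i))
      (Finset.le_sup (f := fun w => Finset.univ.sup fun i => (w i).natAbs) hw)
  set S : Set ℕ := {p : ℕ | p.Prime ∧ B < p} with hS
  set Idl : ℕ → Submodule ℤ ((Fin (2 * g) → ℤ) →₀ ℤ) :=
    fun p => LinearMap.ker (phi g p) with hIdl
  -- the kernels are in the target set
  have hmem : ∀ p ∈ S, Idl p ∈ {I : Submodule ℤ ((Fin (2 * g) → ℤ) →₀ ℤ) |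
      (∀ x ∈ I, ∀ y, br (symp g) x y ∈ I) ∧
      ∀ w ∈ X, Finsupp.single w (1 : ℤ) ∈ I} := by
    rintro p ⟨hp, hpB⟩
    constructor
    · intro x _ y
      simp only [hIdl, LinearMap.mem_ker]
      exact phi_br g p x y
    · intro w hw
      simp only [hIdl, LinearMap.mem_ker, phi_single, one_smul]
      rw [cfun, if_neg]
      rintro ⟨hdvd, hne⟩
      obtain ⟨i, hi⟩ := Function.ne_iff.mp hne
      have h1 : p ∣ (w i).natAbs := by
        have := hdvd i
        rwa [← Int.natAbs_dvd_natAbs, Int.natAbs_natCast] at this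
      have h2 : p ≤ (w i).natAbs := Nat.le_of_dvd (Int.natAbs_pos.mpr hi) h1
      have h3 : (w i).natAbs ≤ B := hBp w hw i
      omega
  -- injectivity on S
  have hinj : Set.InjOn Idl S := by
    rintro p ⟨hp, _⟩ q ⟨hq, _⟩ heq
    by_contra hne
    have hfact : Fact p.Prime := ⟨hp⟩
    set u : Fin (2 * g) → ℤ := fun _ => (p : ℤ) with hu
    have hu0 : u ≠ 0 := by
      intro h0
      have := congrFun h0 ⟨0, h2g⟩
      simp only [hu, Pi.zero_apply] at this
      exact_mod_cast hp.ne_zero (by exact_mod_cast this)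
    have hq0 : Finsupp.single u (1 : ℤ) ∈ Idl q := by
      simp only [hIdl, LinearMap.mem_ker, phi_single, one_smul]
      rw [cfun, if_neg]
      rintro ⟨hdvd, -⟩
      have : (q : ℤ) ∣ (p : ℤ) := hdvd ⟨0, h2g⟩
      rw [Int.natCast_dvd_natCast] at this
      exact hne ((Nat.prime_dvd_prime_iff_eq hq hp).mp this).symm
    rw [← heq] at hq0
    have : phi g p (Finsupp.single u (1 : ℤ)) = 0 := hq0
    rw [phi_single, one_smul, cfun, if_pos ⟨fun i => dvd_refl _, hu0⟩] at this
    exact one_ne_zero this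
  -- S is infinite
  have hSinf : S.Infinite := by
    have h1 : ({p : ℕ | p.Prime} \ {p : ℕ | p ≤ B}).Infinite :=
      Nat.infinite_setOf_prime.diff (Set.finite_le_nat B)
    refine h1.mono fun p hp => ?_
    exact ⟨hp.1, by simpa using hp.2⟩
  exact Set.Infinite.mono (Set.image_subset_iff.mpr hmem) (hSinf.image hinj)
end

section
/- Let ⟨·,·⟩ be the standard symplectic form on ℤ^{2g} and let M be a ℤ-submodule of ℤ[ℤ^{2g}] generated by elements of the form α·w with α ∈ ℤ, w ∈ ℤ^{2g}. For w ∈ ℤ^{2g} let α_M(w) denote the least positive integer α with α·w ∈ M (and 0 if none exists). If M is a Lie ideal of ℤ[ℤ^{2g}] (bracket [w,v] = ⟨w,v⟩·(w+v)), then for all k, i ∈ ℤ^{2g}, α_M(k) divides α_M(i) · gcd over t=1..g of (gcd(k_{2t-1}, k_{2t}) · gcd(i_{2t-1}, i_{2t})). -/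
/-- `α_M(w)` : the least positive integer `α` such that `α • w ∈ M`, and `0` if
no such integer exists. -/
noncomputable def alphaM {n : ℕ} (M : Submodule ℤ ((Fin n → ℤ) →₀ ℤ)) (w : Fin n → ℤ) : ℕ :=
  sInf {a : ℕ | 0 < a ∧ (a : ℤ) • Finsupp.single w (1 : ℤ) ∈ M}

/-! The coefficients `c` with `c • k ∈ M` form an ideal of `ℤ` generated by `α_M(k)`, so it suffices
to put `α_M(i) · gcd(i₂ₜ₋₁, i₂ₜ) · gcd(k₂ₜ₋₁, k₂ₜ)` into that ideal for every `t`. Bracketing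
`α_M(i) • i` with `k - i`, and twice in a row with `v` and `k - i - v`, shows that
`α_M(i) ⟨i, v⟩ ⟨v, k⟩ • k ∈ M` for every `v`. For `v` supported on the `t`-th symplectic plane
this product is a product of two linear forms in `(v₂ₜ₋₁, v₂ₜ)` whose values are exactly the
multiples of the two gcds, and polarizing it produces their product. -/

open Finsupp

theorem Int.natCast_sInf_dvd_iff_mem (I : Ideal ℤ) (c : ℤ) :
    ((sInf {a : ℕ | 0 < a ∧ (a : ℤ) ∈ I} : ℕ) : ℤ) ∣ c ↔ c ∈ I := by
  obtain ⟨d, rfl⟩ : ∃ d : ℤ, I = Ideal.span {d} := Submodule.IsPrincipal.principal I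
  rw [← Int.span_natAbs]
  generalize d.natAbs = m
  have hset : {a : ℕ | 0 < a ∧ (a : ℤ) ∈ Ideal.span {(m : ℤ)}} = {a | 0 < a ∧ m ∣ a} := by
    simp only [Ideal.mem_span_singleton, Int.natCast_dvd_natCast]
  have hinf : sInf {a : ℕ | 0 < a ∧ m ∣ a} = m := by
    rcases Nat.eq_zero_or_pos m with rfl | hm
    · convert Nat.sInf_empty
      ext a
      simp only [zero_dvd_iff, Set.mem_ofPred_eq, Set.mem_empty_iff_false, iff_false]
      omega
    · exact le_antisymm (Nat.sInf_le ⟨hm, dvd_rfl⟩)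
        (le_csInf ⟨m, hm, dvd_rfl⟩ fun a ⟨ha, hma⟩ => Nat.le_of_dvd ha hma)
  rw [hset, hinf, Ideal.mem_span_singleton]

theorem natCast_alphaM_dvd_iff {n : ℕ} (M : Submodule ℤ ((Fin n → ℤ) →₀ ℤ)) (w : Fin n → ℤ)
    (c : ℤ) : (alphaM M w : ℤ) ∣ c ↔ single w c ∈ M := by
  simpa [alphaM, Submodule.mem_comap, smul_single_one] using
    Int.natCast_sInf_dvd_iff_mem (M.comap (lsingle w)) c

theorem single_add_mem_of_single_mem {n : ℕ} {B : (Fin n → ℤ) → (Fin n → ℤ) → ℤ}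
    {M : Submodule ℤ ((Fin n → ℤ) →₀ ℤ)} (hideal : ∀ x ∈ M, ∀ y, br B x y ∈ M)
    {w : Fin n → ℤ} {c : ℤ} (h : single w c ∈ M) (v : Fin n → ℤ) :
    single (w + v) (c * B w v) ∈ M := by
  have hbr := hideal _ h (single v 1)
  rwa [br, sum_single_index (by simp), sum_single_index (by simp), mul_one] at hbr

theorem Int.gcd_mul_gcd_mem_of_forall_mem (J : Ideal ℤ) (a b c d : ℤ)
    (h : ∀ x y, (a * y - x * b) * (x * d - c * y) ∈ J) : (Int.gcd a b * Int.gcd c d : ℤ) ∈ J := by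
  set p := -Int.gcdB a b
  set q := Int.gcdA a b
  set r := Int.gcdB c d
  set s := -Int.gcdA c d
  have hpq : a * q - p * b = Int.gcd a b := by linear_combination -Int.gcd_eq_gcd_ab a b
  have hrs : r * d - c * s = Int.gcd c d := by linear_combination -Int.gcd_eq_gcd_ab c d
  obtain ⟨e, he⟩ : (Int.gcd a b : ℤ) ∣ a * s - r * b :=
    dvd_sub ((Int.gcd_dvd_left a b).mul_right s) ((Int.gcd_dvd_right a b).mul_left r)
  have polar : (a * q - p * b) * (r * d - c * s) + (a * s - r * b) * (p * d - c * q) ∈ J := by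
    convert J.sub_mem (J.sub_mem (h (p + r) (q + s)) (h p q)) (h r s) using 1
    ring
  convert J.sub_mem polar (J.mul_mem_left e (h p q)) using 1
  rw [he]
  linear_combination (e * (p * d - c * q) - (r * d - c * s)) * hpq - Int.gcd a b * hrs

theorem symp_add_left {g : ℕ} (u v z : Fin (2 * g) → ℤ) :
    symp g (u + v) z = symp g u z + symp g v z := by
  simp only [symp, Pi.add_apply, ← Finset.sum_add_distrib]
  exact Finset.sum_congr rfl fun _ _ => by ring

theorem symp_anticomm {g : ℕ} (w z : Fin (2 * g) → ℤ) : symp g w z = -symp g z w := by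
  simp only [symp, ← Finset.sum_neg_distrib]
  exact Finset.sum_congr rfl fun _ _ => by ring

theorem symp_sub_self_right {g : ℕ} (w z : Fin (2 * g) → ℤ) : symp g w (z - w) = symp g w z :=
  Finset.sum_congr rfl fun _ _ => by simp only [Pi.sub_apply]; ring

/-- The vector `(x, y)` in the `t`-th symplectic plane, spanned by the zero-based coordinates
`2t` and `2t + 1`. -/
def planeVec {g : ℕ} (t : Fin g) (x y : ℤ) : Fin (2 * g) → ℤ :=
  fun j => if j.1 = 2 * t.1 then x else if j.1 = 2 * t.1 + 1 then y else 0

theorem symp_planeVec_right {g : ℕ} (t : Fin g) (x y : ℤ) (w : Fin (2 * g) → ℤ) :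
    symp g w (planeVec t x y) = w ⟨2 * t.1, by omega⟩ * y - x * w ⟨2 * t.1 + 1, by omega⟩ := by
  rw [symp, Finset.sum_eq_single t]
  · simp only [planeVec]
    split_ifs <;> first | ring1 | omega
  · intro s _ hst
    have hv : s.1 ≠ t.1 := Fin.val_ne_of_ne hst
    simp only [planeVec]
    split_ifs <;> first | ring1 | omega
  · simp

theorem symp_planeVec_left {g : ℕ} (t : Fin g) (x y : ℤ) (z : Fin (2 * g) → ℤ) :
    symp g (planeVec t x y) z = x * z ⟨2 * t.1 + 1, by omega⟩ - z ⟨2 * t.1, by omega⟩ * y := by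
  rw [symp_anticomm, symp_planeVec_right]
  ring

section LieIdeal

variable {g : ℕ} {M : Submodule ℤ ((Fin (2 * g) → ℤ) →₀ ℤ)}
  (hideal : ∀ x ∈ M, ∀ y, br (symp g) x y ∈ M) {i : Fin (2 * g) → ℤ} {a : ℤ}
  (hi : single i a ∈ M)
include hideal hi

theorem single_mul_symp_mul_symp_mem (k v : Fin (2 * g) → ℤ) :
    single k (a * (symp g i v * symp g v k)) ∈ M := by
  have hk : single k (a * symp g i k) ∈ M := by
    simpa [symp_sub_self_right] using single_add_mem_of_single_mem hideal hi (k - i)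
  have hvk : single k (a * symp g i v * (symp g i k + symp g v k)) ∈ M := by
    simpa [symp_sub_self_right, symp_add_left] using
      single_add_mem_of_single_mem hideal (single_add_mem_of_single_mem hideal hi v) (k - (i + v))
  convert M.sub_mem hvk (M.smul_mem (symp g i v) hk) using 1
  rw [smul_single, ← single_sub]
  ring_nf

theorem single_mul_gcd_mul_gcd_mem (k : Fin (2 * g) → ℤ) (t : Fin g) :
    single k (a * (Int.gcd (k ⟨2 * t.1, by omega⟩) (k ⟨2 * t.1 + 1, by omega⟩)
      * Int.gcd (i ⟨2 * t.1, by omega⟩) (i ⟨2 * t.1 + 1, by omega⟩) : ℤ)) ∈ M := by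
  let J : Ideal ℤ := M.comap (a • lsingle k)
  have hJ : ∀ β, β ∈ J ↔ single k (a * β) ∈ M := by
    simp [J, smul_single]
  rw [mul_comm (Int.gcd _ _ : ℤ), ← hJ]
  refine Int.gcd_mul_gcd_mem_of_forall_mem J _ _ _ _ fun x y => (hJ _).2 ?_
  simpa [symp_planeVec_left, symp_planeVec_right] using
    single_mul_symp_mul_symp_mem hideal hi k (planeVec t x y)

end LieIdeal

theorem stmt4 (g : ℕ) (M : Submodule ℤ ((Fin (2 * g) → ℤ) →₀ ℤ))
    (hideal : ∀ x ∈ M, ∀ y, br (symp g) x y ∈ M) :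
    ∀ k i : Fin (2 * g) → ℤ,
      alphaM M k ∣ alphaM M i *
        Finset.univ.gcd (fun t : Fin g =>
          Int.gcd (k ⟨2 * t.1, by have := t.2; omega⟩) (k ⟨2 * t.1 + 1, by have := t.2; omega⟩)
            * Int.gcd (i ⟨2 * t.1, by have := t.2; omega⟩)
                (i ⟨2 * t.1 + 1, by have := t.2; omega⟩)) := by
  intro k i
  have hi := (natCast_alphaM_dvd_iff M i _).1 dvd_rfl
  have hdvd (t : Fin g) : alphaM M k ∣ alphaM M i *
      (Int.gcd (k ⟨2 * t.1, by omega⟩) (k ⟨2 * t.1 + 1, by omega⟩)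
        * Int.gcd (i ⟨2 * t.1, by omega⟩) (i ⟨2 * t.1 + 1, by omega⟩)) := by
    exact_mod_cast (natCast_alphaM_dvd_iff M k _).2 (single_mul_gcd_mul_gcd_mem hideal hi k t)
  simpa [Finset.gcd_mul_left] using Finset.dvd_gcd fun t _ => hdvd t
end

section
/- Let ⟨·,·⟩ be an antisymmetric bilinear form on ℤⁿ, extended to a ℚ-bilinear antisymmetric form. Let A be the n×n integer matrix with entries A_{ji} = ⟨e_i, e_j⟩, and for x ∈ ℤⁿ write M(x) = A·x, so that ⟨x,y⟩ = y·M(x). For x, y ∈ ℤⁿ, the following are equivalent: (1) there is no v ∈ ℤⁿ with ⟨x,v⟩ ≠ 0 and ⟨y,v⟩ = 0; (2) there exist integers k₁ ≠ 0 and k₂ such that k₁·x − k₂·y lies in the radical C = {z ∈ ℤⁿ : ⟨z,w⟩ = 0 for all w ∈ ℤⁿ}. -/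
theorem stmt5 (n : ℕ) (B : (Fin n → ℤ) →ₗ[ℤ] (Fin n → ℤ) →ₗ[ℤ] ℤ)
    (hB : ∀ x y, B x y = - B y x) (x y : Fin n → ℤ) :
    (¬ ∃ v : Fin n → ℤ, B x v ≠ 0 ∧ B y v = 0) ↔
      ∃ (k₁ k₂ : ℤ), k₁ ≠ 0 ∧ ∀ w : Fin n → ℤ, B (k₁ • x - k₂ • y) w = 0 := by
  constructor
  · intro h
    have h' : ∀ v, B y v = 0 → B x v = 0 := by
      intro v hv
      by_contra hne
      exact h ⟨v, hne, hv⟩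
    by_cases hg : ∀ v, B y v = 0
    · refine ⟨1, 0, one_ne_zero, fun w => ?_⟩
      have := h' w (hg w)
      simp only [one_smul, zero_smul, sub_zero, this]
    · push_neg at hg
      obtain ⟨v₀, hv₀⟩ := hg
      refine ⟨B y v₀, B x v₀, hv₀, fun w => ?_⟩
      have hz : B y (B y v₀ • w - B y w • v₀) = 0 := by
        rw [map_sub, map_smul, map_smul, smul_eq_mul, smul_eq_mul]
        ring
      have hx := h' _ hz
      simp only [map_sub, map_smul, smul_eq_mul] at hx ⊢
      simp only [LinearMap.sub_apply, LinearMap.smul_apply, smul_eq_mul]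
      linarith
  · rintro ⟨k₁, k₂, hk₁, hrad⟩
    rintro ⟨v, hxv, hyv⟩
    have := hrad v
    simp only [map_sub, map_smul, LinearMap.sub_apply, LinearMap.smul_apply,
      smul_eq_mul, hyv, mul_zero, sub_zero] at this
    exact hxv (by
      rcases mul_eq_zero.mp this with h | h
      · exact absurd h hk₁
      · exact h)
end

section
/- Let ⟨·,·⟩ be a nondegenerate antisymmetric bilinear form on ℤⁿ (i.e., for every nonzero x ∈ ℤⁿ there is y with ⟨x,y⟩ ≠ 0). Equip the ℚ-vector space ℚ[ℤⁿ] with basis ℤⁿ and Lie bracket [w,v] = ⟨w,v⟩·(w+v) on basis elements. If a Lie ideal I of ℚ[ℤⁿ] contains a basis element x with x ≠ 0 ∈ ℤⁿ, then I contains every basis element w with w ≠ 0. -/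
/-- The bracket on the free `ℚ`-module on `ℤⁿ` defined on basis elements by
`[w, v] = ⟨w, v⟩ • (w + v)` and extended `ℚ`-bilinearly. -/
noncomputable def brQ {n : ℕ} (B : (Fin n → ℤ) → (Fin n → ℤ) → ℤ)
    (x y : (Fin n → ℤ) →₀ ℚ) : (Fin n → ℤ) →₀ ℚ :=
  x.sum fun w a => y.sum fun v b => Finsupp.single (w + v) (a * b * (B w v : ℚ))

lemma brQ_single {n : ℕ} (B : (Fin n → ℤ) → (Fin n → ℤ) → ℤ) (u v : Fin n → ℤ) :
    brQ B (Finsupp.single u 1) (Finsupp.single v 1)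
      = Finsupp.single (u + v) ((B u v : ℚ)) := by
  rw [brQ]
  rw [Finsupp.sum_single_index (by simp), Finsupp.sum_single_index (by simp)]
  norm_num

lemma step {n : ℕ} (B : (Fin n → ℤ) →ₗ[ℤ] (Fin n → ℤ) →ₗ[ℤ] ℤ)
    (I : Submodule ℚ ((Fin n → ℤ) →₀ ℚ))
    (hI : ∀ x ∈ I, ∀ y, brQ (fun a b => B a b) x y ∈ I)
    (u v : Fin n → ℤ) (huI : Finsupp.single u (1 : ℚ) ∈ I) (huv : B u v ≠ 0) :
    Finsupp.single (u + v) (1 : ℚ) ∈ I := by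
  have h := hI _ huI (Finsupp.single v 1)
  rw [brQ_single] at h
  have h2 := I.smul_mem ((B u v : ℚ))⁻¹ h
  rwa [Finsupp.smul_single, smul_eq_mul, inv_mul_cancel₀ (by exact_mod_cast huv)] at h2

theorem stmt6 (n : ℕ) (B : (Fin n → ℤ) →ₗ[ℤ] (Fin n → ℤ) →ₗ[ℤ] ℤ)
    (hB : ∀ x y, B x y = - B y x)
    (hnd : ∀ x : Fin n → ℤ, x ≠ 0 → ∃ y, B x y ≠ 0)
    (I : Submodule ℚ ((Fin n → ℤ) →₀ ℚ))
    (hI : ∀ x ∈ I, ∀ y, brQ (fun a b => B a b) x y ∈ I)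
    (x : Fin n → ℤ) (hx : x ≠ 0) (hxI : Finsupp.single x (1 : ℚ) ∈ I) :
    ∀ w : Fin n → ℤ, w ≠ 0 → Finsupp.single w (1 : ℚ) ∈ I := by
  have hself : ∀ u : Fin n → ℤ, B u u = 0 := fun u => by have := hB u u; omega
  intro w hw
  obtain ⟨a, ha⟩ := hnd x hx
  obtain ⟨b, hb⟩ := hnd w hw
  have hz : ∃ z, B x z ≠ 0 ∧ B z w ≠ 0 := by
    by_cases h1 : B w a = 0
    · by_cases h2 : B x b = 0
      · refine ⟨a + b, ?_, ?_⟩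
        · simp only [map_add]; omega
        · rw [hB]; simp only [map_add]; omega
      · exact ⟨b, h2, by rw [hB]; omega⟩
    · exact ⟨a, ha, by rw [hB]; omega⟩
  obtain ⟨z, hz1, hz2⟩ := hz
  have h1 : Finsupp.single z (1 : ℚ) ∈ I := by
    have := step B I hI x (z - x) hxI (by simp [map_sub, hself, hz1])
    simpa using this
  have h2 : Finsupp.single w (1 : ℚ) ∈ I := by
    have := step B I hI z (w - z) h1 (by simp [map_sub, hself, hz2])
    simpa using this
  exact h2
end

section
/- Let ⟨·,·⟩ be a nondegenerate antisymmetric bilinear form on ℤ^{2g} (g ≥ 1). Then the only Lie ideals of ℚ[ℤ^{2g}] (with bracket [w,v] = ⟨w,v⟩·(w+v)) are: the zero ideal, the span of the basis element 0 ∈ ℤ^{2g}, the span of all basis elements w ≠ 0, and the whole algebra ℚ[ℤ^{2g}]. -/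
open Finsupp

section SupportedSubmodule

variable {α R : Type*}

theorem supported_setOf_single_one_mem_le [Semiring R] (I : Submodule R (α →₀ R)) :
    supported R R {w | single w 1 ∈ I} ≤ I := by
  rw [supported_eq_span_single, Submodule.span_le]
  rintro _ ⟨w, hw, rfl⟩
  exact hw

variable [Field R] {I : Submodule R (α →₀ R)}

theorem single_one_mem_of_single_mem {a : α} {c : R} (hc : c ≠ 0) (h : single a c ∈ I) :
    single a 1 ∈ I := by
  rwa [← smul_single_one, Submodule.smul_mem_iff I hc] at h

theorem single_one_mem_of_forall_ne {x : α →₀ R} (hx : x ∈ I) {a : α}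
    (h : ∀ w ∈ x.support, w ≠ a → single w 1 ∈ I) (ha : x a ≠ 0) : single a 1 ∈ I := by
  classical
  have hErase : x.erase a ∈ I := by
    refine supported_setOf_single_one_mem_le I ((mem_supported _ _).2 fun w hw => ?_)
    rw [Finset.mem_coe, support_erase, Finset.mem_erase] at hw
    exact h w hw.2 hw.1
  refine single_one_mem_of_single_mem ha ?_
  rw [eq_sub_of_add_eq (single_add_erase a x)]
  exact I.sub_mem hx hErase

theorem eq_supported_of_forall_single_one_mem (h : ∀ x ∈ I, ∀ w ∈ x.support, single w 1 ∈ I) :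
    I = supported R R {w | single w 1 ∈ I} :=
  le_antisymm (fun x hx => (mem_supported _ _).2 fun w hw => h x hx w hw)
    (supported_setOf_single_one_mem_le I)

end SupportedSubmodule

section BilinearForm

variable {R M N P : Type*} [Semiring R] [AddCommMonoid M] [AddCommMonoid N] [AddCommMonoid P]
  [Module R M] [Module R N] [Module R P]

theorem LinearMap.exists_apply_ne_zero_and_apply_ne_zero {f : M →ₗ[R] N} {g : M →ₗ[R] P}
    (hf : f ≠ 0) (hg : g ≠ 0) : ∃ t, f t ≠ 0 ∧ g t ≠ 0 := by
  obtain ⟨y, hy⟩ := DFunLike.ne_iff.mp hf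
  obtain ⟨z, hz⟩ := DFunLike.ne_iff.mp hg
  by_cases hgy : g y = 0
  · by_cases hfz : f z = 0
    · exact ⟨y + z, by simpa [hfz] using hy, by simpa [hgy] using hz⟩
    · exact ⟨z, hfz, hz⟩
  · exact ⟨y, hy, hgy⟩

theorem LinearMap.SeparatingLeft.exists_apply_sq_ne_apply_sq {R M : Type*} [CommRing R] [IsDomain R]
    [AddCommGroup M] [Module R M] {B : M →ₗ[R] M →ₗ[R] R} (hB : B.SeparatingLeft) {u w : M}
    (h₁ : u ≠ w) (h₂ : u ≠ -w) : ∃ t, B u t ^ 2 ≠ B w t ^ 2 := by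
  have hB' := LinearMap.separatingLeft_iff_linear_nontrivial.mp hB
  obtain ⟨t, ht₁, ht₂⟩ := LinearMap.exists_apply_ne_zero_and_apply_ne_zero
    (mt (hB' (u - w)) (sub_ne_zero.mpr h₁)) (mt (hB' (u - -w)) (sub_ne_zero.mpr h₂))
  refine ⟨t, fun h => mul_ne_zero ht₁ ht₂ ?_⟩
  simp only [map_sub, map_neg, LinearMap.sub_apply, LinearMap.neg_apply]
  linear_combination h

end BilinearForm

section Bracket

variable {n : ℕ} (B : (Fin n → ℤ) →ₗ[ℤ] (Fin n → ℤ) →ₗ[ℤ] ℤ)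

theorem brQ_single_single (w v : Fin n → ℤ) (a b : ℚ) :
    brQ (B · ·) (single w a) (single v b) = single (w + v) (a * b * B w v) := by
  simp [brQ]

theorem brQ_single_one_apply (x : (Fin n → ℤ) →₀ ℚ) (v u : Fin n → ℤ) :
    brQ (B · ·) x (single v 1) u = x (u - v) * B (u - v) v := by
  classical
  simp only [brQ, sum_single_index, zero_mul, mul_zero, single_zero, mul_one,
    Finsupp.sum_apply, single_apply, ← eq_sub_iff_add_eq, sum_ite_eq']
  split_ifs with h
  · rfl
  · simp [notMem_support_iff.mp h]

theorem brQ_brQ_single_one_neg_apply (hB : B.IsAlt) (x : (Fin n → ℤ) →₀ ℚ) (v u : Fin n → ℤ) :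
    brQ (B · ·) (brQ (B · ·) x (single v 1)) (single (-v) 1) u = -(x u * B u v ^ 2) := by
  simp only [brQ_single_one_apply, sub_neg_eq_add, add_sub_cancel_right, map_add,
    LinearMap.add_apply, hB.self_eq_zero, add_zero, map_neg, Int.cast_neg]
  ring

variable {B} {I : Submodule ℚ ((Fin n → ℤ) →₀ ℚ)}

theorem single_one_mem_of_single_one_mem_of_apply_ne_zero (hB : B.IsAlt) (hI : ∀ x ∈ I, ∀ y, brQ (B · ·) x y ∈ I)
    {w t : Fin n → ℤ} (hw : single w 1 ∈ I) (h : B w t ≠ 0) : single t 1 ∈ I := by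
  have hbr := hI _ hw (single (t - w) 1)
  rw [brQ_single_single, add_sub_cancel, map_sub, hB.self_eq_zero, sub_zero] at hbr
  exact single_one_mem_of_single_mem (by simpa using h) hbr

theorem single_one_mem_of_single_one_mem (hB : B.IsAlt) (hnd : B.SeparatingLeft)
    (hI : ∀ x ∈ I, ∀ y, brQ (B · ·) x y ∈ I) {u v : Fin n → ℤ} (hu : u ≠ 0) (hv : v ≠ 0)
    (huI : single u 1 ∈ I) : single v 1 ∈ I := by
  have hnd' := LinearMap.separatingLeft_iff_linear_nontrivial.mp hnd
  obtain ⟨t, hut, hvt⟩ :=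
    LinearMap.exists_apply_ne_zero_and_apply_ne_zero (mt (hnd' u) hu) (mt (hnd' v) hv)
  refine single_one_mem_of_single_one_mem_of_apply_ne_zero hB hI (single_one_mem_of_single_one_mem_of_apply_ne_zero hB hI huI hut) ?_
  rwa [← hB.neg, neg_ne_zero]

theorem exists_mem_apply_eq_mul_sub_sq (hB : B.IsAlt) (hI : ∀ x ∈ I, ∀ y, brQ (B · ·) x y ∈ I)
    {x : (Fin n → ℤ) →₀ ℚ} (hx : x ∈ I) (v : Fin n → ℤ) (c : ℚ) :
    ∃ y ∈ I, ∀ u, y u = x u * (c - B u v ^ 2) :=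
  ⟨c • x + brQ (B · ·) (brQ (B · ·) x (single v 1)) (single (-v) 1),
    I.add_mem (I.smul_mem c hx) (hI _ (hI x hx _) _),
    fun u => by simp only [coe_add, coe_smul, Pi.add_apply, Pi.smul_apply, smul_eq_mul,
      brQ_brQ_single_one_neg_apply B hB]; ring⟩

theorem exists_mem_support_eq_or_eq_neg (hB : B.IsAlt) (hnd : B.SeparatingLeft)
    (hI : ∀ x ∈ I, ∀ y, brQ (B · ·) x y ∈ I) {x : (Fin n → ℤ) →₀ ℚ} (hx : x ∈ I)
    {w : Fin n → ℤ} (hxw : x w ≠ 0) :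
    ∃ y ∈ I, y w ≠ 0 ∧ y.support ⊆ x.support ∧ ∀ u ∈ y.support, u = w ∨ u = -w := by
  classical
  induction hN : x.support.card using Nat.strong_induction_on generalizing x with
  | _ N ih =>
  by_cases hpm : ∀ u ∈ x.support, u = w ∨ u = -w
  · exact ⟨x, hx, hxw, subset_rfl, hpm⟩
  push Not at hpm
  obtain ⟨u, hu, huw, hu_neg⟩ := hpm
  obtain ⟨v, hv⟩ := hnd.exists_apply_sq_ne_apply_sq huw hu_neg
  obtain ⟨y, hyI, hy⟩ := exists_mem_apply_eq_mul_sub_sq hB hI hx v (B u v ^ 2)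
  have hsub : y.support ⊆ x.support.erase u := fun u' hu' => by
    rw [mem_support_iff, hy] at hu'
    refine Finset.mem_erase.mpr ⟨fun h => ?_, mem_support_iff.mpr (left_ne_zero_of_mul hu')⟩
    simp [h] at hu'
  have hyw : y w ≠ 0 := by
    rw [hy]
    exact mul_ne_zero hxw (sub_ne_zero.mpr (by exact_mod_cast hv))
  obtain ⟨z, hzI, hzw, hzy, hz⟩ := ih _ (hN ▸ (Finset.card_le_card hsub).trans_lt
    (Finset.card_erase_lt_of_mem hu)) hyI hyw rfl
  exact ⟨z, hzI, hzw, hzy.trans (hsub.trans (Finset.erase_subset _ _)), hz⟩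

/-- Isolating `w` leaves a vector supported on `{w, -w}`; its bracket with a suitable `e_v` is
supported on `{w + v, v - w}`, two points that are not negatives of each other, so isolating
again leaves a multiple of `e_{w + v}`. -/
theorem exists_single_one_mem (hB : B.IsAlt) (hnd : B.SeparatingLeft)
    (hI : ∀ x ∈ I, ∀ y, brQ (B · ·) x y ∈ I) {x : (Fin n → ℤ) →₀ ℚ} (hx : x ∈ I)
    {w : Fin n → ℤ} (hw : w ≠ 0) (hxw : x w ≠ 0) : ∃ u ≠ 0, single u 1 ∈ I := by
  obtain ⟨y, hyI, hyw, -, hy⟩ := exists_mem_support_eq_or_eq_neg hB hnd hI hx hxw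
  obtain ⟨v, hv⟩ : ∃ v, B w v ≠ 0 := by
    by_contra! h
    exact hw (hnd w h)
  have hzw : brQ (B · ·) y (single v 1) (w + v) ≠ 0 := by
    rw [brQ_single_one_apply, add_sub_cancel_right]
    exact mul_ne_zero hyw (by exact_mod_cast hv)
  obtain ⟨z, hzI, hzw, hz_supp, hz⟩ :=
    exists_mem_support_eq_or_eq_neg hB hnd hI (hI y hyI _) hzw
  have hz_single : z.support ⊆ {w + v} := fun u hu => by
    have hyu := hz_supp hu
    rw [mem_support_iff, brQ_single_one_apply] at hyu
    rcases hy _ (mem_support_iff.mpr (left_ne_zero_of_mul hyu)) with h | h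
    · exact Finset.mem_singleton.mpr (eq_add_of_sub_eq h)
    rcases hz u hu with h' | h'
    · exact Finset.mem_singleton.mpr h'
    have hv0 : v = 0 := self_eq_neg.mp (by rw [h'] at h; linear_combination -h)
    simp [hv0] at hv
  refine ⟨w + v, fun h => hv ?_, ?_⟩
  · rw [eq_neg_of_add_eq_zero_right h, map_neg, hB.self_eq_zero, neg_zero]
  · exact single_one_mem_of_single_mem hzw (support_subset_singleton.mp hz_single ▸ hzI)

theorem single_one_mem_of_mem_support (hB : B.IsAlt) (hnd : B.SeparatingLeft)
    (hI : ∀ x ∈ I, ∀ y, brQ (B · ·) x y ∈ I) {x : (Fin n → ℤ) →₀ ℚ} (hx : x ∈ I)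
    {w : Fin n → ℤ} (hw : w ∈ x.support) : single w 1 ∈ I := by
  have hne : ∀ u ∈ x.support, u ≠ 0 → single u 1 ∈ I := fun u hu hu0 => by
    obtain ⟨u', hu', hu'I⟩ := exists_single_one_mem hB hnd hI hx hu0 (mem_support_iff.mp hu)
    exact single_one_mem_of_single_one_mem hB hnd hI hu' hu0 hu'I
  by_cases hw0 : w = 0
  · exact hw0 ▸ single_one_mem_of_forall_ne hx hne (mem_support_iff.mp (hw0 ▸ hw))
  · exact hne w hw hw0

end Bracket

theorem Set.eq_empty_or_singleton_or_compl_or_univ {α : Type*} {S : Set α} {a : α}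
    (h : S ⊆ {a} ∨ {a}ᶜ ⊆ S) : S = ∅ ∨ S = {a} ∨ S = {a}ᶜ ∨ S = univ := by
  rcases h with h | h
  · rcases Set.subset_singleton_iff_eq.mp h with h | h
    · exact Or.inl h
    · exact Or.inr (Or.inl h)
  · by_cases ha : a ∈ S
    · exact Or.inr (Or.inr (Or.inr (Set.eq_univ_of_forall fun u => by
        by_cases hu : u = a
        · exact hu ▸ ha
        · exact h hu)))
    · exact Or.inr (Or.inr (Or.inl (h.antisymm' fun u hu hua => ha (hua ▸ hu))))

theorem stmt7_general (g : ℕ)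
    (B : (Fin (2 * g) → ℤ) →ₗ[ℤ] (Fin (2 * g) → ℤ) →ₗ[ℤ] ℤ)
    (hB : ∀ x y, B x y = - B y x)
    (hnd : ∀ x : Fin (2 * g) → ℤ, x ≠ 0 → ∃ y, B x y ≠ 0)
    (I : Submodule ℚ ((Fin (2 * g) → ℤ) →₀ ℚ))
    (hI : ∀ x ∈ I, ∀ y, brQ (fun a b => B a b) x y ∈ I) :
    I = ⊥ ∨
    I = Submodule.span ℚ {Finsupp.single (0 : Fin (2 * g) → ℤ) (1 : ℚ)} ∨
    I = Submodule.span ℚ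
      {v | ∃ w : Fin (2 * g) → ℤ, w ≠ 0 ∧ v = Finsupp.single w (1 : ℚ)} ∨
    I = ⊤ := by
  have hAlt : B.IsAlt := fun x => by linarith [hB x x]
  have hSep : B.SeparatingLeft := fun x hx => by
    by_contra h
    obtain ⟨y, hy⟩ := hnd x h
    exact hy (hx y)
  have hS : {w | single w (1 : ℚ) ∈ I} ⊆ {0} ∨ {0}ᶜ ⊆ {w | single w (1 : ℚ) ∈ I} := by
    by_cases h : ∃ u, single u (1 : ℚ) ∈ I ∧ u ≠ 0
    · obtain ⟨u, huI, hu⟩ := h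
      exact Or.inr fun v hv => single_one_mem_of_single_one_mem hAlt hSep hI hu hv huI
    · push Not at h
      exact Or.inl h
  rw [eq_supported_of_forall_single_one_mem fun x hx w hw =>
    single_one_mem_of_mem_support hAlt hSep hI hx hw]
  rcases Set.eq_empty_or_singleton_or_compl_or_univ hS with h | h | h | h <;> rw [h]
  · exact Or.inl supported_empty
  · exact Or.inr (Or.inl (by rw [supported_eq_span_single, Set.image_singleton]))
  · refine Or.inr (Or.inr (Or.inl ?_))
    rw [supported_eq_span_single]
    congr 1
    ext
    simp [eq_comm]
  · exact Or.inr (Or.inr (Or.inr supported_univ))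

theorem stmt7 (g : ℕ) (hg : 1 ≤ g)
    (B : (Fin (2 * g) → ℤ) →ₗ[ℤ] (Fin (2 * g) → ℤ) →ₗ[ℤ] ℤ)
    (hB : ∀ x y, B x y = - B y x)
    (hnd : ∀ x : Fin (2 * g) → ℤ, x ≠ 0 → ∃ y, B x y ≠ 0)
    (I : Submodule ℚ ((Fin (2 * g) → ℤ) →₀ ℚ))
    (hI : ∀ x ∈ I, ∀ y, brQ (fun a b => B a b) x y ∈ I) :
    I = ⊥ ∨
    I = Submodule.span ℚ {Finsupp.single (0 : Fin (2 * g) → ℤ) (1 : ℚ)} ∨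
    I = Submodule.span ℚ
      {v | ∃ w : Fin (2 * g) → ℤ, w ≠ 0 ∧ v = Finsupp.single w (1 : ℚ)} ∨
    I = ⊤ :=
  stmt7_general g B hB hnd I hI
end

section
/- Let ⟨·,·⟩ be an antisymmetric bilinear form on ℤⁿ with radical C, and equip ℚ[ℤⁿ] with the bracket [w,v] = ⟨w,v⟩·(w+v). If I is an ideal of ℚ[ℤⁿ] that contains an element of the form f(x) = Σ_{i=1}^{k} qᵢ·(cᵢ + x) for some x ∉ C, with cᵢ ∈ C distinct and qᵢ ∈ ℚ nonzero, then f(y) ∈ I for every y ∈ ℤⁿ \ C. -/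
lemma brQ_single_one (n : ℕ) (B : (Fin n → ℤ) →ₗ[ℤ] (Fin n → ℤ) →ₗ[ℤ] ℤ)
    (v : Fin n → ℤ) (t : (Fin n → ℤ) →₀ ℚ) :
    brQ (fun a b => B a b) t (Finsupp.single v 1) =
      (Finsupp.lsum ℚ fun w => Finsupp.lsingle (w + v) ∘ₗ
        LinearMap.toSpanSingleton ℚ ℚ ((B w v : ℤ) : ℚ)) t := by
  unfold brQ
  rw [Finsupp.lsum_apply]
  apply Finsupp.sum_congr
  intro w _
  rw [Finsupp.sum_single_index (by simp)]
  simp [LinearMap.toSpanSingleton_apply, smul_eq_mul, mul_comm]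

theorem stmt12 (n k : ℕ) (B : (Fin n → ℤ) →ₗ[ℤ] (Fin n → ℤ) →ₗ[ℤ] ℤ)
    (hB : ∀ x y, B x y = - B y x)
    (c : Fin k → (Fin n → ℤ)) (hc : ∀ i, ∀ y, B (c i) y = 0)
    (hcinj : Function.Injective c)
    (q : Fin k → ℚ) (hq : ∀ i, q i ≠ 0)
    (I : Submodule ℚ ((Fin n → ℤ) →₀ ℚ))
    (hI : ∀ x ∈ I, ∀ y, brQ (fun a b => B a b) x y ∈ I)
    (x : Fin n → ℤ) (hx : ¬ ∀ y, B x y = 0)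
    (hfx : (∑ i, Finsupp.single (c i + x) (q i)) ∈ I) :
    ∀ z : Fin n → ℤ, (¬ ∀ y, B z y = 0) →
      (∑ i, Finsupp.single (c i + z) (q i)) ∈ I := by
  have hBxx : ∀ w : Fin n → ℤ, B w w = 0 := fun w => by
    have := hB w w; omega
  -- one step: if f(x') ∈ I and B x' y ≠ 0 then f(y) ∈ I
  have step : ∀ x' : Fin n → ℤ, (∑ i, Finsupp.single (c i + x') (q i)) ∈ I →
      ∀ y : Fin n → ℤ, B x' y ≠ 0 →
      (∑ i, Finsupp.single (c i + y) (q i)) ∈ I := by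
    intro x' hx' y hy
    set v : Fin n → ℤ := y - x' with hv
    have hBv : B x' v = B x' y := by
      rw [hv, map_sub, hBxx, sub_zero]
    have hmem := hI _ hx' (Finsupp.single v 1)
    rw [brQ_single_one, map_sum] at hmem
    have hterm : ∀ i : Fin k,
        (Finsupp.lsum ℚ fun w => Finsupp.lsingle (w + v) ∘ₗ
          LinearMap.toSpanSingleton ℚ ℚ ((B w v : ℤ) : ℚ))
          (Finsupp.single (c i + x') (q i)) =
        Finsupp.single (c i + y) (q i * ((B x' y : ℤ) : ℚ)) := by
      intro i
      rw [Finsupp.lsum_single]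
      simp only [LinearMap.comp_apply, LinearMap.toSpanSingleton_apply,
        Finsupp.lsingle_apply]
      have h1 : c i + x' + v = c i + y := by
        rw [hv]; abel
      have h2 : B (c i + x') v = B x' y := by
        rw [map_add, LinearMap.add_apply, hc, zero_add, hBv]
      rw [h1, h2, smul_eq_mul]
    rw [Finset.sum_congr rfl fun i _ => hterm i] at hmem
    have heq : (∑ i, Finsupp.single (c i + y) (q i * ((B x' y : ℤ) : ℚ))) =
        ((B x' y : ℤ) : ℚ) • ∑ i, Finsupp.single (c i + y) (q i) := by
      rw [Finset.smul_sum]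
      refine Finset.sum_congr rfl fun i _ => ?_
      rw [Finsupp.smul_single, smul_eq_mul, mul_comm]
    rw [heq] at hmem
    have hne : ((B x' y : ℤ) : ℚ) ≠ 0 := by
      exact_mod_cast hy
    have := I.smul_mem (((B x' y : ℤ) : ℚ))⁻¹ hmem
    rwa [smul_smul, inv_mul_cancel₀ hne, one_smul] at this
  intro z hz
  push_neg at hx hz
  obtain ⟨u, hu⟩ := hx
  obtain ⟨w, hw⟩ := hz
  by_cases hxz : B x z ≠ 0
  · exact step x hfx z hxz
  · push_neg at hxz
    by_cases hxw : B x w ≠ 0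
    · -- intermediate x + w
      have h1 : (∑ i, Finsupp.single (c i + (x + w)) (q i)) ∈ I :=
        step x hfx (x + w) (by rw [map_add, hBxx, zero_add]; exact hxw)
      refine step (x + w) h1 z ?_
      rw [map_add, LinearMap.add_apply, hxz, zero_add]
      have := hB w z
      omega
    · push_neg at hxw
      by_cases huz : B u z ≠ 0
      · have h1 : (∑ i, Finsupp.single (c i + (x + u)) (q i)) ∈ I :=
          step x hfx (x + u) (by rw [map_add, hBxx, zero_add]; exact hu)
        refine step (x + u) h1 z ?_
        rw [map_add, LinearMap.add_apply, hxz, zero_add]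
        exact huz
      · push_neg at huz
        have h1 : (∑ i, Finsupp.single (c i + (x + (u + w))) (q i)) ∈ I :=
          step x hfx (x + (u + w)) (by
            rw [map_add, hBxx, zero_add, map_add, hxw, add_zero]
            exact hu)
        refine step (x + (u + w)) h1 z ?_
        rw [map_add, LinearMap.add_apply, hxz, zero_add, map_add,
          LinearMap.add_apply, huz, zero_add]
        have := hB w z
        omega
end

section
/- Let ⟨·,·⟩ be an antisymmetric bilinear form on ℤⁿ with radical C, and let I be a Lie ideal of ℚ[ℤⁿ] (bracket [w,v] = ⟨w,v⟩·(w+v)). Then I equals the direct sum of a family of 'primitive' ideals ℚ·{f_α(x) : x ∈ ℤⁿ \ C} (where f_α(x) = Σᵢ qᵢ·(cᵢ+x) for fixed distinct cᵢ ∈ C and nonzero qᵢ ∈ ℚ depending on α) together with a ℚ-subspace of the span of basis elements indexed by C. Conversely, any such direct sum is an ideal. -/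
/-- A primitive datum `φ` is a nonzero finitely supported function supported on the
radical `C`; the corresponding primitive ideal is the span of the elements
`f_φ(x) = Σ_c φ(c) · (c + x)` for `x ∉ C`. -/
noncomputable def primitiveIdeal {n : ℕ} (B : (Fin n → ℤ) → (Fin n → ℤ) → ℤ)
    (φ : (Fin n → ℤ) →₀ ℚ) : Submodule ℚ ((Fin n → ℤ) →₀ ℚ) :=
  Submodule.span ℚ
    {v | ∃ x : Fin n → ℤ, (¬ ∀ y, B x y = 0) ∧
      v = φ.sum fun c qc => Finsupp.single (c + x) qc}

/-!
For `y ∈ ℤⁿ` the operator `x ↦ [[[x, e_y], e_y], e_{-2y}]` is diagonal, with eigenvalue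
`-2 ⟨w, y⟩³` on `e_w`. Choosing `y` so that `⟨·, y⟩` separates the finitely many cosets of `C`
met by the support of `f ∈ I`, Lagrange interpolation in this operator shows that each coset
component of `f` lies in `I`. The component on `C` itself lies in `ℚ[C]`; a component on a coset
`w₀ + C` with `w₀ ∉ C` is `f_φ(w₀)` for some `φ` supported on `C`. Since
`[f_φ(x), e_y] = ⟨x, y⟩ f_φ(x + y)`, from `f_φ(w₀) ∈ I` we reach `f_φ(x) ∈ I` for every `x ∉ C`
(through some `z` with `⟨w₀, z⟩ ≠ 0 ≠ ⟨x, z⟩`), so the primitive ideal of `φ` lies in `I`.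
The same formula, together with `ℚ[C]` being central, shows that every such sum is an ideal.
-/

open Finsupp

open Polynomial in
theorem Module.exists_forall_apply_ne_zero {R M : Type*} [CommRing R] [IsDomain R] [Infinite R]
    [AddCommGroup M] [Module R M] (s : Finset (M →ₗ[R] R)) (hs : ∀ f ∈ s, f ≠ 0) :
    ∃ y, ∀ f ∈ s, f y ≠ 0 := by
  classical
  induction s using Finset.induction_on with
  | empty => exact ⟨0, by simp⟩
  | insert g s _ ih =>
    obtain ⟨y, hy⟩ := ih fun f hf => hs f (Finset.mem_insert_of_mem hf)
    obtain ⟨z, hz⟩ := DFunLike.ne_iff.mp (hs g (Finset.mem_insert_self g s))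
    have hline : ∀ f ∈ insert g s, C (f z) * X + C (f y) ≠ 0 := by
      intro f hf h
      have h1 := congrArg (coeff · 1) h
      have h0 := congrArg (coeff · 0) h
      simp [coeff_C] at h1 h0
      rcases Finset.mem_insert.mp hf with rfl | hf
      · exact hz h1
      · exact hy f hf h0
    obtain ⟨t, ht⟩ : ∃ t, (∏ f ∈ insert g s, (C (f z) * X + C (f y))).eval t ≠ 0 := by
      by_contra! h
      exact Finset.prod_ne_zero_iff.mpr hline (Polynomial.funext fun t => by rw [h t, eval_zero])
    refine ⟨y + t • z, fun f hf => ?_⟩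
    rw [eval_prod, Finset.prod_ne_zero_iff] at ht
    have := ht f hf
    rwa [eval_add, eval_mul, eval_C, eval_C, eval_X, mul_comm, add_comm, ← smul_eq_mul,
      ← map_smul, ← map_add] at this

open Polynomial in
theorem Finsupp.filter_mem_of_diagonal {α K : Type*} [Field K] [DecidableEq K]
    (D : Module.End K (α →₀ K)) (d : α → K) (hD : ∀ w a, D (single w a) = single w (d w * a))
    {I : Submodule K (α →₀ K)} (hI : ∀ x ∈ I, D x ∈ I) {f : α →₀ K} (hf : f ∈ I) (c : K) :
    f.filter (fun w => d w = c) ∈ I := by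
  have hD_apply : ∀ f w, D f w = d w * f w := by
    intro f w
    induction f using Finsupp.induction_linear with
    | zero => simp
    | add f g hf hg => simp [hf, hg, mul_add]
    | single v a =>
      rcases eq_or_ne v w with rfl | h
      · simp [hD]
      · simp [hD, h]
  have haeval : ∀ P : K[X], ∀ f w, aeval D P f w = P.eval (d w) * f w := by
    intro P
    induction P using Polynomial.induction_on with
    | C a => simp [Module.algebraMap_end_apply]
    | add P Q hP hQ => simp [hP, hQ, add_mul]
    | monomial k a ih =>
      intro f w
      rw [pow_succ, ← mul_assoc, map_mul, aeval_X, Module.End.mul_apply, ih, hD_apply]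
      simp only [eval_mul, eval_C, eval_pow, eval_X]
      ring
  set s := insert c (f.support.image d)
  suffices aeval D (Lagrange.basis s id c) f = f.filter (fun w => d w = c) by
    rw [← this]; exact aeval_apply_smul_mem_of_le_comap hf _ D (SetLike.le_def.mpr hI)
  ext w
  rw [haeval, filter_apply]
  split_ifs with h
  · rw [h, show (Lagrange.basis s id c).eval c = 1 from
      Lagrange.eval_basis_self (Set.injOn_id _) (Finset.mem_insert_self c _), one_mul]
  · by_cases hw : f w = 0
    · rw [hw, mul_zero]
    · have hw : d w ∈ s :=
        Finset.mem_insert_of_mem (Finset.mem_image_of_mem d (mem_support_iff.mpr hw))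
      rw [show (Lagrange.basis s id c).eval (d w) = 0 from
        Lagrange.eval_basis_of_ne (v := id) (Ne.symm h) hw, zero_mul]

theorem Finsupp.filter_congr {α M : Type*} [Zero M] {p q : α → Prop} [DecidablePred p]
    [DecidablePred q] {f : α →₀ M} (h : ∀ x ∈ f.support, p x ↔ q x) : f.filter p = f.filter q := by
  ext x
  by_cases hx : f x = 0
  · simp [filter_apply, hx]
  · simp [filter_apply, h x (mem_support_iff.mpr hx)]

theorem Finsupp.sum_filter_fiberwise {α β M : Type*} [AddCommMonoid M] [DecidableEq β]
    (f : α →₀ M) (g : α → β) :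
    ∑ b ∈ f.support.image g, f.filter (fun a => g a = b) = f := by
  simp_rw [filter_eq_sum]
  rw [Finset.sum_fiberwise_of_maps_to fun a ha => Finset.mem_image_of_mem g ha]
  exact f.sum_single

section Bracket

variable {L : Type*} [AddCommGroup L] (B : L →ₗ[ℤ] L →ₗ[ℤ] ℤ)

noncomputable def bracketSingle (y : L) : Module.End ℚ (L →₀ ℚ) :=
  Finsupp.lsum ℚ fun w => (B w y : ℚ) • Finsupp.lsingle (w + y)

theorem bracketSingle_single (y w : L) (a : ℚ) :
    bracketSingle B y (single w a) = single (w + y) (B w y * a) := by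
  simp [bracketSingle, smul_single]

theorem bracketSingle_apply (y : L) (f : L →₀ ℚ) (w : L) :
    bracketSingle B y f w = B (w - y) y * f (w - y) := by
  induction f using Finsupp.induction_linear with
  | zero => simp
  | add f g hf hg => simp [hf, hg, mul_add]
  | single v a =>
    rw [bracketSingle_single]
    rcases eq_or_ne (v + y) w with rfl | h
    · simp
    · rw [single_eq_of_ne (Ne.symm h), single_eq_of_ne (by rintro rfl; simp at h), mul_zero]

noncomputable def Finsupp.translate (x : L) (φ : L →₀ ℚ) : L →₀ ℚ :=
  φ.mapDomain (· + x)

theorem Finsupp.translate_apply (x : L) (φ : L →₀ ℚ) (w : L) : φ.translate x w = φ (w - x) := by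
  rw [Finsupp.translate, ← mapDomain_apply (add_left_injective x) φ (w - x), sub_add_cancel]

theorem Finsupp.translate_translate (x y : L) (φ : L →₀ ℚ) :
    (φ.translate x).translate y = φ.translate (x + y) := by
  ext w; simp [Finsupp.translate_apply, sub_sub, add_comm]

theorem Finsupp.translate_zero (φ : L →₀ ℚ) : φ.translate 0 = φ := by
  ext w; simp [Finsupp.translate_apply]

theorem bracketSingle_translate {φ : L →₀ ℚ} (hφ : ∀ c ∈ φ.support, B c = 0) (x y : L) :
    bracketSingle B y (φ.translate x) = (B x y : ℚ) • φ.translate (x + y) := by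
  ext w
  rw [bracketSingle_apply, Finsupp.translate_apply, Finsupp.smul_apply,
    Finsupp.translate_apply, smul_eq_mul, sub_sub, add_comm y]
  by_cases hw : w - (x + y) ∈ φ.support
  · have : B (w - y) = B x := by
      rw [show w - y = (w - (x + y)) + x by abel, map_add, hφ _ hw, zero_add]
    rw [this]
  · rw [notMem_support_iff.mp hw, mul_zero, mul_zero]

theorem bracketSingle_eq_zero {f : L →₀ ℚ} (hf : ∀ c ∈ f.support, B c = 0) (y : L) :
    bracketSingle B y f = 0 := by
  simpa [Finsupp.translate_zero] using bracketSingle_translate B hf 0 y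

end Bracket

section Invariant

variable {L : Type*} [AddCommGroup L] {B : L →ₗ[ℤ] L →ₗ[ℤ] ℤ} (hB : B.IsAlt)
  {I : Submodule ℚ (L →₀ ℚ)} (hI : ∀ y, ∀ x ∈ I, bracketSingle B y x ∈ I)
include hB hI

theorem filter_fiber_mem [DecidableEq (L →ₗ[ℤ] ℤ)] {f : L →₀ ℚ} (hf : f ∈ I) (g : L →ₗ[ℤ] ℤ) :
    f.filter (fun w => B w = g) ∈ I := by
  obtain ⟨y, hy⟩ := Module.exists_forall_apply_ne_zero
    ((f.support.filter fun w => B w ≠ g).image fun w => B w - g) (by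
      simp only [Finset.mem_image, Finset.mem_filter]
      rintro _ ⟨w, ⟨-, hne⟩, rfl⟩
      exact sub_ne_zero.mpr hne)
  -- `[[[e_w, e_y], e_y], e_{-2y}] = -2 ⟨w, y⟩³ e_w`, and the cube separates the values `⟨w, y⟩`.
  let Q := bracketSingle B (-(y + y)) ∘ₗ bracketSingle B y ∘ₗ bracketSingle B y
  have hQ : ∀ w a, Q (single w a) = single w (((-2 * B w y ^ 3 : ℤ) : ℚ) * a) := by
    intro w a
    simp only [Q, LinearMap.comp_apply, bracketSingle_single, map_add, map_neg,
      LinearMap.add_apply, hB.self_eq_zero, add_zero]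
    rw [show w + y + y + -(y + y) = w by abel]
    congr 1
    push_cast; ring
  have hfiber : ∀ w ∈ f.support, (B w = g ↔ ((-2 * B w y ^ 3 : ℤ) : ℚ) = (-2 * g y ^ 3 : ℤ)) := by
    intro w hw
    refine ⟨fun h => by rw [h], fun h => ?_⟩
    have hcube : B w y ^ 3 = g y ^ 3 := by
      have := Int.cast_injective h
      linarith
    replace hcube := (Odd.strictMono_pow (by decide : Odd 3)).injective hcube
    by_contra hne
    exact hy _ (Finset.mem_image_of_mem _ (Finset.mem_filter.mpr ⟨hw, hne⟩)) (by simp [hcube])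
  have hQI : ∀ x ∈ I, Q x ∈ I := fun x hx => hI _ _ (hI _ _ (hI _ _ hx))
  rw [Finsupp.filter_congr hfiber]
  exact filter_mem_of_diagonal Q (fun w => ((-2 * B w y ^ 3 : ℤ) : ℚ)) hQ hQI hf _

theorem translate_mem_of_apply_ne_zero {φ : L →₀ ℚ} (hφ : ∀ c ∈ φ.support, B c = 0) {w x : L}
    (h : φ.translate w ∈ I) (hwx : B w x ≠ 0) : φ.translate x ∈ I := by
  have := hI (x - w) _ h
  rw [bracketSingle_translate B hφ, add_sub_cancel, map_sub, hB.self_eq_zero, sub_zero] at this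
  exact (Submodule.smul_mem_iff I (Int.cast_ne_zero.mpr hwx)).mp this

theorem translate_mem_of_ne_zero {φ : L →₀ ℚ} (hφ : ∀ c ∈ φ.support, B c = 0) {w x : L}
    (h : φ.translate w ∈ I) (hw : B w ≠ 0) (hx : B x ≠ 0) : φ.translate x ∈ I := by
  classical
  obtain ⟨z, hz⟩ := Module.exists_forall_apply_ne_zero {B w, B x} (by simp [hw, hx])
  have hz_mem : φ.translate z ∈ I := translate_mem_of_apply_ne_zero hB hI hφ h (hz _ (by simp))
  refine translate_mem_of_apply_ne_zero hB hI hφ hz_mem ?_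
  rw [← hB.neg]
  exact neg_ne_zero.mpr (hz _ (by simp))

end Invariant

section Primitive

variable {n : ℕ} {B : (Fin n → ℤ) →ₗ[ℤ] (Fin n → ℤ) →ₗ[ℤ] ℤ}

theorem brQ_eq_sum (x y : (Fin n → ℤ) →₀ ℚ) :
    brQ (fun a b => B a b) x y = y.sum fun v b => b • bracketSingle B v x := by
  rw [brQ, sum_comm]
  refine sum_congr fun v _ => ?_
  rw [bracketSingle, lsum_apply, smul_sum]
  refine sum_congr fun w _ => ?_
  simp only [LinearMap.smul_apply, lsingle_apply, smul_single, smul_eq_mul]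
  congr 1
  ring

theorem brQ_mem_iff (I : Submodule ℚ ((Fin n → ℤ) →₀ ℚ)) :
    (∀ x ∈ I, ∀ y, brQ (fun a b => B a b) x y ∈ I) ↔ ∀ y, ∀ x ∈ I, bracketSingle B y x ∈ I := by
  simp_rw [brQ_eq_sum]
  refine ⟨fun h y x hx => ?_, fun h x hx y => sum_mem fun v _ => I.smul_mem _ (h v x hx)⟩
  simpa using h x hx (single y 1)

theorem primitiveIdeal_eq_span (φ : (Fin n → ℤ) →₀ ℚ) :
    primitiveIdeal (fun a b => B a b) φ =
      Submodule.span ℚ ((fun x => φ.translate x) '' {x | B x ≠ 0}) := by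
  rw [primitiveIdeal]
  congr 1
  ext v
  simp [Finsupp.translate, mapDomain, LinearMap.ext_iff, eq_comm]

theorem translate_mem_primitiveIdeal (φ : (Fin n → ℤ) →₀ ℚ) {x : Fin n → ℤ} (hx : B x ≠ 0) :
    φ.translate x ∈ primitiveIdeal (fun a b => B a b) φ := by
  rw [primitiveIdeal_eq_span]
  exact Submodule.subset_span ⟨x, hx, rfl⟩

theorem bracketSingle_mem_primitiveIdeal (hB : B.IsAlt) {φ : (Fin n → ℤ) →₀ ℚ}
    (hφ : ∀ c ∈ φ.support, B c = 0) (y : Fin n → ℤ) {x : (Fin n → ℤ) →₀ ℚ}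
    (hx : x ∈ primitiveIdeal (fun a b => B a b) φ) :
    bracketSingle B y x ∈ primitiveIdeal (fun a b => B a b) φ := by
  rw [primitiveIdeal_eq_span] at hx
  induction hx using Submodule.span_induction with
  | mem _ hv =>
    obtain ⟨x, -, rfl⟩ := hv
    rw [bracketSingle_translate B hφ]
    rcases eq_or_ne (B x y) 0 with h | h
    · simp [h]
    · refine Submodule.smul_mem _ _ (translate_mem_primitiveIdeal φ fun h0 => h ?_)
      simpa [hB.self_eq_zero] using LinearMap.congr_fun h0 y
  | zero => simp
  | add _ _ _ _ h₁ h₂ => rw [map_add]; exact add_mem h₁ h₂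
  | smul a _ _ h => rw [map_smul]; exact Submodule.smul_mem _ a h

variable (hB : B.IsAlt) {I : Submodule ℚ ((Fin n → ℤ) →₀ ℚ)}
  (hI : ∀ y, ∀ x ∈ I, bracketSingle B y x ∈ I)
include hB hI

theorem primitiveIdeal_le {φ : (Fin n → ℤ) →₀ ℚ} (hφ : ∀ c ∈ φ.support, B c = 0)
    {w : Fin n → ℤ} (hw : B w ≠ 0) (h : φ.translate w ∈ I) :
    primitiveIdeal (fun a b => B a b) φ ≤ I := by
  rw [primitiveIdeal_eq_span, Submodule.span_le]
  rintro _ ⟨x, hx, rfl⟩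
  exact translate_mem_of_ne_zero hB hI hφ h hw hx

theorem exists_primitiveIdeal_of_fiber {q : (Fin n → ℤ) →₀ ℚ} (hq : q ∈ I) {w₀ : Fin n → ℤ}
    (hw₀ : q w₀ ≠ 0) (hB₀ : B w₀ ≠ 0) (hfiber : ∀ w ∈ q.support, B w = B w₀) :
    ∃ φ, φ ≠ 0 ∧ (∀ c ∈ φ.support, B c = 0) ∧ primitiveIdeal (fun a b => B a b) φ ≤ I ∧
      q ∈ primitiveIdeal (fun a b => B a b) φ := by
  have hq_eq : (q.translate (-w₀)).translate w₀ = q := by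
    rw [Finsupp.translate_translate, neg_add_cancel, Finsupp.translate_zero]
  have hφ : ∀ c ∈ (q.translate (-w₀)).support, B c = 0 := by
    intro c hc
    rw [mem_support_iff, Finsupp.translate_apply, sub_neg_eq_add] at hc
    simpa using hfiber _ (mem_support_iff.mpr hc)
  refine ⟨q.translate (-w₀), fun h0 => hw₀ ?_, hφ, primitiveIdeal_le hB hI hφ hB₀ (by rwa [hq_eq]),
    by simpa only [hq_eq] using translate_mem_primitiveIdeal (q.translate (-w₀)) hB₀⟩
  simpa [Finsupp.translate_apply] using DFunLike.congr_fun h0 0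

end Primitive

section Decomposition

variable {n : ℕ} {B : (Fin n → ℤ) →ₗ[ℤ] (Fin n → ℤ) →ₗ[ℤ] ℤ}

theorem span_single_radical_eq_supported :
    Submodule.span ℚ {v | ∃ z : Fin n → ℤ, (∀ y, B z y = 0) ∧ v = single z (1 : ℚ)} =
      supported ℚ ℚ {z | B z = 0} := by
  rw [supported_eq_span_single]
  congr 1
  ext v
  simp [LinearMap.ext_iff, eq_comm]

theorem le_sup_iSup_primitiveIdeal (hB : B.IsAlt) {I : Submodule ℚ ((Fin n → ℤ) →₀ ℚ)}
    (hI : ∀ y, ∀ x ∈ I, bracketSingle B y x ∈ I) :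
    I ≤ I ⊓ supported ℚ ℚ {z | B z = 0} ⊔
      ⨆ φ ∈ {φ | φ ≠ 0 ∧ (∀ c ∈ φ.support, B c = 0) ∧ primitiveIdeal (fun a b => B a b) φ ≤ I},
        primitiveIdeal (fun a b => B a b) φ := by
  classical
  intro f hf
  rw [← f.sum_filter_fiberwise B]
  refine Submodule.sum_mem _ fun g hg => ?_
  obtain ⟨w₀, hw₀, rfl⟩ := Finset.mem_image.mp hg
  have hq := filter_fiber_mem hB hI hf (B w₀)
  have hfiber : ∀ w ∈ (f.filter fun w => B w = B w₀).support, B w = B w₀ := fun w hw => by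
    by_contra h
    exact mem_support_iff.mp hw (filter_apply_neg _ _ h)
  rcases eq_or_ne (B w₀) 0 with h0 | h0
  · exact Submodule.mem_sup_left ⟨hq, fun w hw => (hfiber w hw).trans h0⟩
  · obtain ⟨φ, hφ0, hφ, hφI, hqφ⟩ := exists_primitiveIdeal_of_fiber hB hI hq
      (by rwa [filter_apply_pos (fun w => B w = B w₀) _ rfl, ← mem_support_iff]) h0 hfiber
    exact Submodule.mem_sup_right
      (Submodule.mem_iSup_of_mem φ (Submodule.mem_iSup_of_mem ⟨hφ0, hφ, hφI⟩ hqφ))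

theorem bracketSingle_mem_sup_iSup_primitiveIdeal (hB : B.IsAlt)
    {C₁ : Submodule ℚ ((Fin n → ℤ) →₀ ℚ)} (hC₁ : C₁ ≤ supported ℚ ℚ {z | B z = 0})
    {Φ : Set ((Fin n → ℤ) →₀ ℚ)} (hΦ : ∀ φ ∈ Φ, ∀ c ∈ φ.support, B c = 0) (y : Fin n → ℤ)
    {x : (Fin n → ℤ) →₀ ℚ} (hx : x ∈ C₁ ⊔ ⨆ φ ∈ Φ, primitiveIdeal (fun a b => B a b) φ) :
    bracketSingle B y x ∈ C₁ ⊔ ⨆ φ ∈ Φ, primitiveIdeal (fun a b => B a b) φ := by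
  obtain ⟨c, hc, p, hp, rfl⟩ := Submodule.mem_sup.mp hx
  rw [map_add, bracketSingle_eq_zero B (fun w hw => hC₁ hc hw) y, zero_add]
  have hle : (⨆ φ ∈ Φ, primitiveIdeal (fun a b => B a b) φ).map (bracketSingle B y) ≤
      ⨆ φ ∈ Φ, primitiveIdeal (fun a b => B a b) φ := by
    simp_rw [Submodule.map_iSup]
    exact iSup₂_mono fun φ hφ => Submodule.map_le_iff_le_comap.mpr fun x hx =>
      bracketSingle_mem_primitiveIdeal hB (hΦ φ hφ) y hx
  exact Submodule.mem_sup_right (hle (Submodule.mem_map_of_mem hp))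

end Decomposition

theorem stmt18 (n : ℕ) (B : (Fin n → ℤ) →ₗ[ℤ] (Fin n → ℤ) →ₗ[ℤ] ℤ)
    (hB : ∀ x y, B x y = - B y x)
    (I : Submodule ℚ ((Fin n → ℤ) →₀ ℚ)) :
    (∀ x ∈ I, ∀ y, brQ (fun a b => B a b) x y ∈ I) ↔
      ∃ (Φ : Set ((Fin n → ℤ) →₀ ℚ)) (C₁ : Submodule ℚ ((Fin n → ℤ) →₀ ℚ)),
        (∀ φ ∈ Φ, φ ≠ 0 ∧ ∀ c ∈ φ.support, ∀ y, B c y = 0) ∧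
        C₁ ≤ Submodule.span ℚ
          {v | ∃ z : Fin n → ℤ, (∀ y, B z y = 0) ∧ v = Finsupp.single z (1 : ℚ)} ∧
        I = C₁ ⊔ ⨆ φ ∈ Φ, primitiveIdeal (fun a b => B a b) φ := by
  have hAlt : B.IsAlt := fun v => by linarith [hB v v]
  have hrad : ∀ c, (∀ y, B c y = 0) ↔ B c = 0 := fun c => by simp [LinearMap.ext_iff]
  rw [brQ_mem_iff, span_single_radical_eq_supported]
  constructor
  · intro hI
    refine ⟨{φ | φ ≠ 0 ∧ (∀ c ∈ φ.support, B c = 0) ∧ primitiveIdeal (fun a b => B a b) φ ≤ I},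
      I ⊓ supported ℚ ℚ {z | B z = 0},
      fun φ hφ => ⟨hφ.1, fun c hc => (hrad c).mpr (hφ.2.1 c hc)⟩, inf_le_right,
      le_antisymm (le_sup_iSup_primitiveIdeal hAlt hI)
        (sup_le inf_le_left (iSup₂_le fun φ hφ => hφ.2.2))⟩
  · rintro ⟨Φ, C₁, hΦ, hC₁, rfl⟩ y x hx
    exact bracketSingle_mem_sup_iSup_primitiveIdeal hAlt hC₁
      (fun φ hφ c hc => (hrad c).mp ((hΦ φ hφ).2 c hc)) y hx
end

section
/- Let ⟨·,·⟩ be a nondegenerate antisymmetric bilinear form on ℤ^{2g}, and equip ℚ[ℤ^{2g}] with the bracket [w,v] = ⟨w,v⟩·(w+v). If I is a nonzero ideal of ℚ[ℤ^{2g}] not contained in the span of the basis element 0, then among elements of I outside ℚ·(basis element 0), any element with the minimal number of nonzero basis coefficients is a scalar multiple of a single basis element w with w ≠ 0. -/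
lemma brQ_single_apply {n : ℕ} (B : (Fin n → ℤ) → (Fin n → ℤ) → ℤ)
    (x : (Fin n → ℤ) →₀ ℚ) (v u : Fin n → ℤ) :
    brQ B x (Finsupp.single v 1) u = x (u - v) * ((B (u - v) v : ℤ) : ℚ) := by
  classical
  unfold brQ
  have h1 : (x.sum fun w a => (Finsupp.single v (1:ℚ)).sum fun v' b =>
      Finsupp.single (w + v') (a * b * (B w v' : ℚ)))
      = x.sum fun w a => Finsupp.single (w + v) (a * (B w v : ℚ)) := by
    apply Finsupp.sum_congr
    intro w _
    rw [Finsupp.sum_single_index] <;> simp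
  rw [h1, Finsupp.sum_apply, Finsupp.sum]
  rw [Finset.sum_congr rfl (fun w _ => Finsupp.single_apply)]
  by_cases hm : u - v ∈ x.support
  · rw [Finset.sum_eq_single (u - v)]
    · simp
    · intro b _ hb
      rw [if_neg]
      intro h
      exact hb (by rw [← h]; abel)
    · intro h; exact absurd hm h
  · rw [Finset.sum_eq_zero]
    · have := Finsupp.notMem_support_iff.mp hm
      rw [this]; ring
    · intro b hb
      rw [if_neg]
      intro h
      apply hm
      have : b = u - v := by rw [← h]; abel
      rwa [← this]

lemma mem_span_single_zero {n : ℕ} (x : (Fin n → ℤ) →₀ ℚ) :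
    x ∈ Submodule.span ℚ {Finsupp.single (0 : Fin n → ℤ) (1 : ℚ)} ↔ ∀ u ≠ 0, x u = 0 := by
  rw [Submodule.mem_span_singleton]
  constructor
  · rintro ⟨a, rfl⟩ u hu
    simp [Finsupp.single_apply, hu.symm, Ne.symm hu]
  · intro h
    refine ⟨x 0, ?_⟩
    ext u
    by_cases hu : u = 0
    · subst hu; simp
    · rw [h u hu]; simp [Finsupp.single_apply, Ne.symm hu]

lemma product_zero {n : ℕ} (f g : (Fin n → ℤ) →ₗ[ℤ] ℤ) (h : ∀ v, f v * g v = 0) :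
    (∀ v, f v = 0) ∨ (∀ v, g v = 0) := by
  by_contra hc
  push_neg at hc
  obtain ⟨⟨a, ha⟩, ⟨b, hb⟩⟩ := hc
  have hfb : f b = 0 := by rcases mul_eq_zero.mp (h b) with h' | h'
                           · exact h'
                           · exact absurd h' hb
  have hga : g a = 0 := by rcases mul_eq_zero.mp (h a) with h' | h'
                           · exact absurd h' ha
                           · exact h'
  have := h (a + b)
  rw [map_add, map_add, hfb, hga, add_zero, zero_add] at this
  rcases mul_eq_zero.mp this with h' | h'
  · exact ha h'
  · exact hb h'

theorem stmt19 (g : ℕ)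
    (B : (Fin (2 * g) → ℤ) →ₗ[ℤ] (Fin (2 * g) → ℤ) →ₗ[ℤ] ℤ)
    (hB : ∀ x y, B x y = - B y x)
    (hnd : ∀ x : Fin (2 * g) → ℤ, (∀ y, B x y = 0) → x = 0)
    (I : Submodule ℚ ((Fin (2 * g) → ℤ) →₀ ℚ))
    (hI : ∀ x ∈ I, ∀ y, brQ (fun a b => B a b) x y ∈ I)
    (hne : I ≠ ⊥)
    (hnsub : ¬ I ≤ Submodule.span ℚ {Finsupp.single (0 : Fin (2 * g) → ℤ) (1 : ℚ)}) :
    ∀ γ ∈ I, γ ∉ Submodule.span ℚ {Finsupp.single (0 : Fin (2 * g) → ℤ) (1 : ℚ)} →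
      (∀ δ ∈ I, δ ∉ Submodule.span ℚ {Finsupp.single (0 : Fin (2 * g) → ℤ) (1 : ℚ)} →
        γ.support.card ≤ δ.support.card) →
      ∃ (q : ℚ) (w : Fin (2 * g) → ℤ), w ≠ 0 ∧ γ = Finsupp.single w q := by
  intro γ hγI hγspan hmin
  classical
  have hBB : ∀ x, B x x = 0 := fun x => by have := hB x x; omega
  -- a nonzero support element outside 0
  obtain ⟨w₀, hw₀ne, hw₀⟩ : ∃ u, u ≠ 0 ∧ γ u ≠ 0 := by
    by_contra h
    push_neg at h
    exact hγspan ((mem_span_single_zero γ).mpr h)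
  -- key minimality tool
  have hkey : ∀ δ ∈ I, ∀ u₀ : Fin (2*g) → ℤ, u₀ ≠ 0 → δ u₀ ≠ 0 →
      δ.support.card < γ.support.card → False := by
    intro δ hδI u₀ hu₀ hδu hcard
    have hδspan : δ ∉ Submodule.span ℚ {Finsupp.single (0 : Fin (2*g) → ℤ) (1:ℚ)} := by
      intro hm
      exact hδu ((mem_span_single_zero δ).mp hm u₀ hu₀)
    exact absurd (hmin δ hδI hδspan) (not_le.mpr hcard)
  -- Step A : γ 0 = 0
  have hγ0 : γ 0 = 0 := by
    by_contra h0
    obtain ⟨v, hv⟩ : ∃ v, B w₀ v ≠ 0 := by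
      by_contra h; push_neg at h; exact hw₀ne (hnd w₀ h)
    set δ := brQ (fun a b => B a b) γ (Finsupp.single v 1) with hδdef
    have hδI := hI γ hγI (Finsupp.single v 1)
    have hδapp : ∀ u, δ u = γ (u - v) * ((B (u - v) v : ℤ) : ℚ) :=
      fun u => brQ_single_apply _ γ v u
    have hwv0 : w₀ + v ≠ 0 := by
      intro h
      have hveq : v = -w₀ := by
        have := congrArg (fun z => z - w₀) h
        simpa [sub_eq_add_neg, add_comm] using this
      rw [hveq] at hv
      simp [hBB] at hv
    have hδw : δ (w₀ + v) ≠ 0 := by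
      rw [hδapp, add_sub_cancel_right]
      exact mul_ne_zero hw₀ (by exact_mod_cast hv)
    have hsub : δ.support ⊆ (γ.support.erase 0).image (· + v) := by
      intro u hu
      have hne' := Finsupp.mem_support_iff.mp hu
      rw [hδapp] at hne'
      have h1 : γ (u - v) ≠ 0 := fun h => hne' (by rw [h]; ring)
      have h2 : u - v ≠ 0 := by
        intro h
        rw [h] at hne'
        simp at hne'
      refine Finset.mem_image.mpr ⟨u - v, Finset.mem_erase.mpr ⟨h2, Finsupp.mem_support_iff.mpr h1⟩, by abel⟩
    have h0s : (0 : Fin (2*g) → ℤ) ∈ γ.support := Finsupp.mem_support_iff.mpr h0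
    have hcard : δ.support.card < γ.support.card := by
      calc δ.support.card ≤ ((γ.support.erase 0).image (· + v)).card := Finset.card_le_card hsub
        _ ≤ (γ.support.erase 0).card := Finset.card_image_le
        _ < γ.support.card := Finset.card_erase_lt_of_mem h0s
    exact hkey δ hδI (w₀ + v) hwv0 hδw hcard
  have hw₀mem : w₀ ∈ γ.support := Finsupp.mem_support_iff.mpr hw₀
  have hsuppne : ∀ u ∈ γ.support, u ≠ 0 := by
    intro u hu h
    exact Finsupp.mem_support_iff.mp hu (h ▸ hγ0)
  -- Step B : squares equal
  have hsq : ∀ w₁ ∈ γ.support, ∀ w₂ ∈ γ.support, w₁ ≠ w₂ → ∀ v,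
      (B w₁ v)^2 = (B w₂ v)^2 := by
    intro w₁ h1 w₂ h2 hne12 v
    by_contra hd
    set η := brQ (fun a b => B a b) (brQ (fun a b => B a b) γ (Finsupp.single v 1))
      (Finsupp.single (-v) 1) with hηdef
    set ζ := ((B w₁ v : ℤ) : ℚ)^2 • γ + η with hζdef
    have hζI : ζ ∈ I := I.add_mem (I.smul_mem _ hγI) (hI _ (hI γ hγI _) _)
    have hηapp : ∀ u, η u = - (γ u * ((B u v : ℤ) : ℚ)^2) := by
      intro u
      rw [hηdef, brQ_single_apply, brQ_single_apply]
      have e1 : u - -v - v = u := by abel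
      have e2 : u - -v = u + v := by abel
      rw [e1, e2]
      have e3 : (B (u + v)) (-v) = - B u v := by
        rw [map_neg]
        have : B (u + v) v = B u v + B v v := by rw [map_add]; simp
        rw [this, hBB]
        ring
      rw [e3]
      push_cast
      ring
    have hζapp : ∀ u, ζ u = γ u * (((B w₁ v : ℤ) : ℚ)^2 - ((B u v : ℤ) : ℚ)^2) := by
      intro u
      rw [hζdef, Finsupp.add_apply, Finsupp.smul_apply, hηapp u, smul_eq_mul]
      ring
    have hζw2 : ζ w₂ ≠ 0 := by
      rw [hζapp]
      apply mul_ne_zero (Finsupp.mem_support_iff.mp h2)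
      intro h
      apply hd
      have h' := sub_eq_zero.mp h
      exact_mod_cast h'
    have hsub : ζ.support ⊆ γ.support.erase w₁ := by
      intro u hu
      have hne' := Finsupp.mem_support_iff.mp hu
      rw [hζapp] at hne'
      refine Finset.mem_erase.mpr ⟨?_, Finsupp.mem_support_iff.mpr (fun h => hne' (by rw [h]; ring))⟩
      intro h
      subst h
      simp at hne'
    have hcard : ζ.support.card < γ.support.card :=
      lt_of_le_of_lt (Finset.card_le_card hsub) (Finset.card_erase_lt_of_mem h1)
    exact hkey ζ hζI w₂ (hsuppne w₂ h2) hζw2 hcard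
  -- Step C : distinct support elements are negatives
  have hneg : ∀ w₁ ∈ γ.support, ∀ w₂ ∈ γ.support, w₁ ≠ w₂ → w₂ = -w₁ := by
    intro w₁ h1 w₂ h2 hne12
    have hprod : ∀ v, (B (w₁ - w₂)) v * (B (w₁ + w₂)) v = 0 := by
      intro v
      have h := hsq w₁ h1 w₂ h2 hne12 v
      have e1 : (B (w₁ - w₂)) v = B w₁ v - B w₂ v := by rw [map_sub]; simp
      have e2 : (B (w₁ + w₂)) v = B w₁ v + B w₂ v := by rw [map_add]; simp
      rw [e1, e2]
      linear_combination h
    rcases product_zero _ _ hprod with h | h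
    · exact absurd (sub_eq_zero.mp (hnd _ h)) hne12
    · exact eq_neg_of_add_eq_zero_right (hnd _ h)
  -- case on support cardinality
  by_cases hone : γ.support.card = 1
  · obtain ⟨a, ha⟩ := Finset.card_eq_one.mp hone
    have hamem : a ∈ γ.support := ha ▸ Finset.mem_singleton_self a
    refine ⟨γ a, a, hsuppne a hamem, ?_⟩
    ext u
    by_cases hu : u = a
    · subst hu; simp
    · rw [Finsupp.notMem_support_iff.mp (by rw [ha]; simpa using hu),
        Finsupp.single_apply, if_neg (Ne.symm hu)]
  · exfalso
    -- support = {w₀, -w₀}, card = 2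
    have hcardpos : 1 ≤ γ.support.card := Finset.card_pos.mpr ⟨w₀, hw₀mem⟩
    have hcard2 : 2 ≤ γ.support.card := by omega
    obtain ⟨u, humem, hune⟩ : ∃ u ∈ γ.support, u ≠ w₀ := by
      by_contra h
      push_neg at h
      have : γ.support ⊆ {w₀} := fun x hx => Finset.mem_singleton.mpr (h x hx)
      have := Finset.card_le_card this
      simp at this
      omega
    have huneg : u = -w₀ := hneg w₀ hw₀mem u humem (Ne.symm hune)
    have hsubset : γ.support ⊆ {w₀, -w₀} := by
      intro x hx
      by_cases h : x = w₀
      · simp [h]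
      · have := hneg w₀ hw₀mem x hx (Ne.symm h)
        simp [this]
    have hγcard : γ.support.card = 2 := by
      have := Finset.card_le_card hsubset
      have h2 : ({w₀, -w₀} : Finset (Fin (2*g) → ℤ)).card ≤ 2 := Finset.card_insert_le _ _ |>.trans (by simp)
      omega
    -- build β' with support ⊆ {w₀ + w₀}
    obtain ⟨v, hv⟩ : ∃ v, B w₀ v ≠ 0 := by
      by_contra h; push_neg at h; exact hw₀ne (hnd w₀ h)
    set β := brQ (fun a b => B a b) γ (Finsupp.single v 1) with hβdef
    set β' := brQ (fun a b => B a b) β (Finsupp.single (w₀ - v) 1) with hβ'def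
    have hβ'I : β' ∈ I := hI _ (hI γ hγI _) _
    have hβapp : ∀ z, β z = γ (z - v) * ((B (z - v) v : ℤ) : ℚ) :=
      fun z => brQ_single_apply _ γ v z
    have hβ'app : ∀ z, β' z = β (z - (w₀ - v)) * ((B (z - (w₀ - v)) (w₀ - v) : ℤ) : ℚ) :=
      fun z => brQ_single_apply _ β (w₀ - v) z
    have h2w0 : w₀ + w₀ ≠ 0 := by
      intro h
      apply hw₀ne
      funext i
      have := congrFun h i
      simp only [Pi.add_apply, Pi.zero_apply] at this
      simp only [Pi.zero_apply]
      omega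
    have hβ'val : β' (w₀ + w₀) ≠ 0 := by
      rw [hβ'app]
      have e1 : w₀ + w₀ - (w₀ - v) = w₀ + v := by abel
      rw [e1, hβapp]
      have e2 : w₀ + v - v = w₀ := by abel
      rw [e2]
      have e3 : (B (w₀ + v)) (w₀ - v) = -2 * B w₀ v := by
        have h1 := hB v w₀
        have h2 := hBB w₀
        have h3 := hBB v
        simp only [map_add, map_sub, LinearMap.add_apply]
        omega
      rw [e3]
      apply mul_ne_zero (mul_ne_zero hw₀ (by exact_mod_cast hv))
      exact_mod_cast (by omega : (-2 : ℤ) * B w₀ v ≠ 0)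
    have hsuppβ' : β'.support ⊆ {w₀ + w₀} := by
      intro z hz
      have hne' := Finsupp.mem_support_iff.mp hz
      rw [hβ'app, hβapp] at hne'
      have hγne : γ (z - (w₀ - v) - v) ≠ 0 := by
        intro h; rw [h] at hne'; simp at hne'
      have hmem := hsubset (Finsupp.mem_support_iff.mpr hγne)
      simp only [Finset.mem_insert, Finset.mem_singleton] at hmem
      rcases hmem with h | h
      · -- z = w₀ + w₀
        have : z = w₀ + w₀ := by
          have := congrArg (fun t => t + (w₀ - v) + v) h
          simpa [sub_add_cancel] using (by
            have h' : z - (w₀ - v) - v + (w₀ - v) + v = z := by abel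
            rw [← h']
            rw [h]
            abel)
        simp [this]
      · -- z = 0, but then β' z = 0, contradiction
        exfalso
        have hz0 : z = 0 := by
          have h' : z - (w₀ - v) - v + (w₀ - v) + v = z := by abel
          rw [← h', h]
          abel
        -- B (z - (w₀ - v)) (w₀ - v) = B (-(w₀-v)) (w₀-v) = 0
        apply hne'
        have hzv : z - (w₀ - v) = -(w₀ - v) := by rw [hz0]; abel
        have h0 : ((B (-(w₀ - v))) (w₀ - v) : ℤ) = 0 := by
          rw [map_neg, LinearMap.neg_apply, hBB, neg_zero]
        rw [hzv, h0]
        simp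
    have hcardβ' : β'.support.card < γ.support.card := by
      have := Finset.card_le_card hsuppβ'
      simp at this
      omega
    exact hkey β' hβ'I (w₀ + w₀) h2w0 hβ'val hcardβ'
end
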